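/- arXiv:2408.11644 — 4 statements merged into one kernel-verified Lean document; each statement's English description precedes it below -/
import Mathlib

section
/- Let p_1 ≤ p_2 ≤ ... ≤ p_t with t ≥ 2. If for some index i with 2 ≤ i ≤ t-1 we have p_i + 1 ≤ p_{i+1} ≤ p_i + p_1 - 1, then the graph H(n; p_1, ..., p_t) contains a subgraph isomorphic to K_{p_1} ∪ K_{p_2} ∪ ... ∪ K_{p_t}; in particular H(n; p_1, ..., p_t) is not (K_{p_1} ∪ ... ∪ K_{p_t})-saturated. -/
open SimpleGraph Finset

/-- `H` is a subgraph of `G` (up to isomorphism): an injective homomorphism exists. -/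
def IsSubgraphOf {α β : Type*} (H : SimpleGraph α) (G : SimpleGraph β) : Prop :=
  ∃ f : α → β, Function.Injective f ∧ ∀ a b, H.Adj a b → G.Adj (f a) (f b)

/-- `G` is `H`-saturated. -/
def IsSat {α β : Type*} (G : SimpleGraph α) (H : SimpleGraph β) : Prop :=
  ¬ IsSubgraphOf H G ∧
    ∀ u v : α, u ≠ v → ¬ G.Adj u v →
      IsSubgraphOf H (G ⊔ SimpleGraph.fromEdgeSet {s(u, v)})

/-- First position of block `i` (for `2 ≤ i`) in `H(n; p₁, …, p_t)`. -/
def blockStart (p : ℕ → ℕ) (i : ℕ) : ℕ :=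
  (p 1 - 2) + ∑ j ∈ Finset.Ico 2 i, (p j + 1)

def inBlock (p : ℕ → ℕ) (i : ℕ) (a : ℕ) : Prop :=
  blockStart p i ≤ a ∧ a < blockStart p i + (p i + 1)

/-- `H(n; p₁, …, p_t) = K_{p₁-2} ∨ (K_{p₂+1} ∪ ⋯ ∪ K_{p_t+1} ∪ I_m)`. -/
def Hgraph (n t : ℕ) (p : ℕ → ℕ) : SimpleGraph (Fin n) :=
  SimpleGraph.fromRel (fun u v =>
    (u : ℕ) < p 1 - 2 ∨ ∃ i, 2 ≤ i ∧ i ≤ t ∧ inBlock p i (u : ℕ) ∧ inBlock p i (v : ℕ))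

/-- The disjoint union `K_{p₁} ∪ K_{p₂} ∪ ⋯ ∪ K_{p_t}`. -/
def cliqueUnion (t : ℕ) (p : ℕ → ℕ) :
    SimpleGraph (Σ i : Fin t, Fin (p ((i : ℕ) + 1))) where
  Adj a b := a ≠ b ∧ a.1 = b.1
  symm := ⟨fun a b h => ⟨h.1.symm, h.2.symm⟩⟩
  loopless := ⟨fun a h => h.1 rfl⟩

/-- The disjoint union `K_{p₂} ∪ ⋯ ∪ K_{p_t}`. -/
def cliqueUnionTail (t : ℕ) (p : ℕ → ℕ) :
    SimpleGraph (Σ i : Fin (t - 1), Fin (p ((i : ℕ) + 2))) where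
  Adj a b := a ≠ b ∧ a.1 = b.1
  symm := ⟨fun a b h => ⟨h.1.symm, h.2.symm⟩⟩
  loopless := ⟨fun a h => h.1 rfl⟩

/-!
Place `K_{p_j}` inside the block `K_{p_j+1}` for every `j ≥ 2` except that blocks `i` and `i+1`
swap roles: `K_{p_i}` goes into block `i+1`, leaving `p_{i+1} + 1 - p_i` of its vertices free, and
`K_{p_{i+1}}` takes all of block `i` together with `p_{i+1} - p_i - 1` join vertices. The other
`p₁ + p_i - p_{i+1} - 1` join vertices and the free vertices of block `i+1` span `K_{p₁}`, since
every join vertex is adjacent to everything. The gap condition says exactly that both counts of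
join vertices are nonnegative.
-/
theorem isSubgraphOf_cliqueUnion {V : Type*} {G : SimpleGraph V} {t : ℕ} {p : ℕ → ℕ}
    (S : Fin t → Finset V) (hcard : ∀ j : Fin t, p (j + 1) ≤ #(S j))
    (hdisj : Pairwise (Function.onFun Disjoint S)) (hclique : ∀ j, G.IsClique (S j : Set V)) :
    IsSubgraphOf (cliqueUnion t p) G := by
  let f : (Σ j : Fin t, Fin (p (j + 1))) → V := fun a =>
    (S a.1).equivFin.symm (Fin.castLE (hcard a.1) a.2)
  have hmem : ∀ a, f a ∈ S a.1 := fun a => coe_mem _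
  have hinj : Function.Injective f := by
    rintro ⟨j, k⟩ ⟨j', k'⟩ h
    obtain rfl : j = j' := by
      by_contra hne
      exact disjoint_left.1 (hdisj hne) (hmem ⟨j, k⟩) (h ▸ hmem ⟨j', k'⟩)
    have hk := (S j).equivFin.symm.injective (Subtype.ext h)
    rw [Fin.castLE_inj] at hk
    exact congrArg _ hk
  refine ⟨f, hinj, ?_⟩
  rintro a b ⟨hne, hab⟩
  exact hclique a.1 (hmem a) (hab ▸ hmem b) (hinj.ne hne)

def inJoinOrBlock (p : ℕ → ℕ) (c a : ℕ) : Prop :=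
  a < p 1 - 2 ∨ inBlock p c a

theorem isClique_Hgraph {n t c : ℕ} {p : ℕ → ℕ} (hc : 2 ≤ c) (hct : c ≤ t) {s : Set (Fin n)}
    (hs : ∀ v ∈ s, inJoinOrBlock p c v) : (Hgraph n t p).IsClique s := by
  intro u hu v hv huv
  refine ⟨huv, ?_⟩
  rcases hs u hu with hu' | hu'
  · exact Or.inl (Or.inl hu')
  rcases hs v hv with hv' | hv'
  · exact Or.inr (Or.inl hv')
  · exact Or.inl (Or.inr ⟨c, hc, hct, hu', hv'⟩)

theorem sub_two_le_blockStart (p : ℕ → ℕ) (c : ℕ) : p 1 - 2 ≤ blockStart p c :=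
  Nat.le_add_right _ _

theorem blockStart_succ (p : ℕ → ℕ) {c : ℕ} (hc : 2 ≤ c) :
    blockStart p (c + 1) = blockStart p c + (p c + 1) := by
  rw [blockStart, blockStart, sum_Ico_succ_top hc, add_assoc]

theorem blockStart_add_le (p : ℕ → ℕ) {c d : ℕ} (hc : 2 ≤ c) (hcd : c < d) :
    blockStart p c + (p c + 1) ≤ blockStart p d := by
  induction d, hcd using Nat.le_induction with
  | base => exact (blockStart_succ p hc).ge
  | succ d hcd ih => rw [blockStart_succ p (by omega)]; omega

theorem eq_of_inBlock {p : ℕ → ℕ} {c d a : ℕ} (hc : 2 ≤ c) (hd : 2 ≤ d)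
    (hca : inBlock p c a) (hda : inBlock p d a) : c = d := by
  unfold inBlock at hca hda
  rcases lt_trichotomy c d with h | h | h
  · have := blockStart_add_le p hc h; omega
  · exact h
  · have := blockStart_add_le p hd h; omega

theorem lt_blockStart_of_inJoinOrBlock {p : ℕ → ℕ} {c t a : ℕ} (hc : 2 ≤ c) (hct : c ≤ t)
    (h : inJoinOrBlock p c a) : a < blockStart p (t + 1) := by
  have := sub_two_le_blockStart p (t + 1)
  have := blockStart_add_le p hc (Nat.lt_add_one_of_le hct)
  unfold inJoinOrBlock inBlock at h
  omega

def swapJoinCount (p : ℕ → ℕ) (i : ℕ) : ℕ := p 1 + p i - (p (i + 1) + 1)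

/-- The vertex set of the copy of `K_{p_{j+1}}` (indices are shifted: `j = 0` is `K_{p₁}`). -/
def swapClique (p : ℕ → ℕ) (i j : ℕ) : Finset ℕ :=
  if j = 0 then
    range (swapJoinCount p i) ∪
      Ico (blockStart p (i + 1) + p i) (blockStart p (i + 1) + (p (i + 1) + 1))
  else if j + 1 = i then Ico (blockStart p (i + 1)) (blockStart p (i + 1) + p i)
  else if j = i then
    Ico (blockStart p i) (blockStart p i + (p i + 1)) ∪ Ico (swapJoinCount p i) (p 1 - 2)
  else Ico (blockStart p (j + 1)) (blockStart p (j + 1) + p (j + 1))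

def swapBlock (i j : ℕ) : ℕ :=
  if j = 0 ∨ j + 1 = i then i + 1 else if j = i then i else j + 1

theorem two_le_swapBlock {i : ℕ} (hi : 2 ≤ i) (j : ℕ) : 2 ≤ swapBlock i j := by
  unfold swapBlock; split_ifs <;> omega

theorem swapBlock_le {i j t : ℕ} (hi : i + 1 ≤ t) (hj : j < t) : swapBlock i j ≤ t := by
  unfold swapBlock; split_ifs <;> omega

section Swap

variable {p : ℕ → ℕ} {i : ℕ}

theorem inJoinOrBlock_of_mem_swapClique (hlow : p i + 1 ≤ p (i + 1)) {j v : ℕ}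
    (hv : v ∈ swapClique p i j) : inJoinOrBlock p (swapBlock i j) v := by
  have := sub_two_le_blockStart p (i + 1)
  unfold swapClique at hv
  unfold inJoinOrBlock inBlock swapBlock swapJoinCount at *
  split_ifs at * <;> simp only [mem_union, mem_Ico, mem_range] at hv <;> omega

theorem card_swapClique (hi : 2 ≤ i) (hlow : p i + 1 ≤ p (i + 1))
    (hhigh : p (i + 1) ≤ p i + p 1 - 1) (j : ℕ) : #(swapClique p i j) = p (j + 1) := by
  have := sub_two_le_blockStart p i
  have := sub_two_le_blockStart p (i + 1)
  unfold swapClique swapJoinCount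
  split_ifs with h0 h1 h2
  · subst h0
    rw [card_union_of_disjoint, card_range, Nat.card_Ico, zero_add]
    · omega
    · exact disjoint_left.2 fun v hv hv' => by simp only [mem_range, mem_Ico] at hv hv'; omega
  · rw [Nat.card_Ico, h1]; omega
  · subst h2
    rw [card_union_of_disjoint, Nat.card_Ico, Nat.card_Ico]
    · omega
    · exact disjoint_left.2 fun v hv hv' => by simp only [mem_Ico] at hv hv'; omega
  · rw [Nat.card_Ico]; omega

theorem disjoint_swapClique (hi : 2 ≤ i) (hlow : p i + 1 ≤ p (i + 1)) {j j' : ℕ}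
    (hne : j ≠ j') : Disjoint (swapClique p i j) (swapClique p i j') := by
  refine disjoint_left.2 fun v hv hv' => ?_
  have hblock : v < p 1 - 2 ∨ swapBlock i j = swapBlock i j' := by
    rcases inJoinOrBlock_of_mem_swapClique hlow hv with h | h
    · exact Or.inl h
    rcases inJoinOrBlock_of_mem_swapClique hlow hv' with h' | h'
    · exact Or.inl h'
    · exact Or.inr (eq_of_inBlock (two_le_swapBlock hi j) (two_le_swapBlock hi j') h h')
  have := sub_two_le_blockStart p i
  have := sub_two_le_blockStart p (i + 1)
  have := sub_two_le_blockStart p (j + 1)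
  have := sub_two_le_blockStart p (j' + 1)
  have := blockStart_succ p hi
  unfold swapClique swapBlock swapJoinCount at *
  split_ifs at * <;> simp only [mem_union, mem_Ico, mem_range] at hv hv' <;> omega

end Swap

theorem Hgraph_not_saturated_of_close_gap_general (n t : ℕ) (p : ℕ → ℕ)
    (hfit : blockStart p (t + 1) ≤ n)
    (i : ℕ) (hi1 : 2 ≤ i) (hi2 : i ≤ t - 1)
    (hlow : p i + 1 ≤ p (i + 1)) (hhigh : p (i + 1) ≤ p i + p 1 - 1) :
    IsSubgraphOf (cliqueUnion t p) (Hgraph n t p) ∧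
      ¬ IsSat (Hgraph n t p) (cliqueUnion t p) := by
  have hblock (j : Fin t) : 2 ≤ swapBlock i j ∧ swapBlock i j ≤ t :=
    ⟨two_le_swapBlock hi1 j, swapBlock_le (by omega) j.isLt⟩
  have hloc (j : Fin t) (v : ℕ) (hv : v ∈ swapClique p i j) :
      inJoinOrBlock p (swapBlock i j) v :=
    inJoinOrBlock_of_mem_swapClique hlow hv
  have hlt (j : Fin t) (v : ℕ) (hv : v ∈ swapClique p i j) : v < n :=
    (lt_blockStart_of_inJoinOrBlock (hblock j).1 (hblock j).2 (hloc j v hv)).trans_le hfit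
  have hsub : IsSubgraphOf (cliqueUnion t p) (Hgraph n t p) := by
    refine isSubgraphOf_cliqueUnion (fun j => (swapClique p i j).attachFin (hlt j))
      (fun j => ?_) (fun j j' hne => ?_) (fun j => ?_)
    · rw [card_attachFin, card_swapClique hi1 hlow hhigh]
    · refine disjoint_left.2 fun v hv hv' => ?_
      exact disjoint_left.1 (disjoint_swapClique hi1 hlow (Fin.val_ne_of_ne hne))
        ((mem_attachFin _).1 hv) ((mem_attachFin _).1 hv')
    · exact isClique_Hgraph (hblock j).1 (hblock j).2
        fun v hv => hloc j v ((mem_attachFin _).1 hv)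
  exact ⟨hsub, fun hsat => hsat.1 hsub⟩

/-- If `p_i + 1 ≤ p_{i+1} ≤ p_i + p₁ - 1` for some `2 ≤ i ≤ t-1`, then
`H(n; p₁, …, p_t)` contains `K_{p₁} ∪ ⋯ ∪ K_{p_t}`, hence is not saturated. -/
theorem Hgraph_not_saturated_of_close_gap (n t : ℕ) (p : ℕ → ℕ) (ht : 2 ≤ t)
    (hp1 : 2 ≤ p 1)
    (hmono : ∀ i j, 1 ≤ i → i ≤ j → j ≤ t → p i ≤ p j)
    (hfit : blockStart p (t + 1) ≤ n)
    (i : ℕ) (hi1 : 2 ≤ i) (hi2 : i ≤ t - 1)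
    (hlow : p i + 1 ≤ p (i + 1)) (hhigh : p (i + 1) ≤ p i + p 1 - 1) :
    IsSubgraphOf (cliqueUnion t p) (Hgraph n t p) ∧
      ¬ IsSat (Hgraph n t p) (cliqueUnion t p) :=
  Hgraph_not_saturated_of_close_gap_general n t p hfit i hi1 hi2 hlow hhigh
end

section
/- Let t ≥ 2 and p_1 ≤ p_2 ≤ ... ≤ p_t with p_1 ≥ 2. The graph H(n; p_1, p_2, ..., p_t) is (K_{p_1} ∪ K_{p_2} ∪ ... ∪ K_{p_t})-saturated if and only if for every i with 2 ≤ i ≤ t-1, either p_{i+1} - p_i ≥ p_1 or p_{i+1} = p_i. -/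
open SimpleGraph Finset

/-!
Write `C` for the core `K_{p₁-2}` of `H` and `B_m` for its block `K_{p_m+1}`. Two adjacent vertices
outside `C` lie in a common block, so every clique of a copy of `K_{p₁} ∪ ⋯ ∪ K_{p_t}` in `H` lies
in some `C ∪ B_m`; as `|C| = p₁ - 2`, two cliques sharing `B_m` are both smaller than `p_m`. Under
the gap condition this forces the largest clique into a block of its own size, alone, and
induction on `t` ends with one clique and no block. If the condition fails at `i`, with
`d = p_{i+1} - p_i < p₁`, then `K_{p_i}` and `K_{p₁}` share `B_{i+1}` while `K_{p_{i+1}}` takes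
`B_i` plus `d - 1` core vertices. Adding a non-edge `uv` turns `C ∪ {u, v}` into a `K_{p₁}`, and
each `B_m` minus `u, v` still contains a `K_{p_m}`.
-/

lemma card_le_card_sdiff_pair_add_one {α : Type*} [DecidableEq α] {s : Finset α} {a b : α}
    (h : ¬ (a ∈ s ∧ b ∈ s)) : #s ≤ #(s \ {a, b}) + 1 := by
  have := card_sdiff_add_card_inter s {a, b}
  have : #(s ∩ {a, b}) ≤ 1 := card_le_one.2 fun x hx y hy => by
    simp only [mem_inter, mem_insert, mem_singleton] at hx hy
    grind
  omega

lemma cliqueUnion_isSubgraphOf_iff {V : Type*} {t : ℕ} {p : ℕ → ℕ} (G : SimpleGraph V) :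
    IsSubgraphOf (cliqueUnion t p) G ↔ ∃ S : Fin t → Finset V,
      (∀ i : Fin t, p ((i : ℕ) + 1) ≤ #(S i)) ∧ (∀ i, G.IsClique (S i : Set V)) ∧
        Pairwise fun i k => Disjoint (S i) (S k) := by
  classical
  constructor
  · rintro ⟨f, hinj, hadj⟩
    refine ⟨fun i => univ.image fun x => f ⟨i, x⟩, fun i => ?_, fun i => ?_, fun i k hik => ?_⟩
    · exact (card_image_of_injective _ (hinj.comp sigma_mk_injective)).trans
        (card_fin _) |>.ge
    · simp only [coe_image, coe_univ, Set.image_univ]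
      rintro _ ⟨x, rfl⟩ _ ⟨y, rfl⟩ hxy
      exact hadj _ _ ⟨fun h => hxy (congrArg f h), rfl⟩
    · simp only [Finset.disjoint_left, mem_image, mem_univ, true_and]
      rintro _ ⟨x, rfl⟩ ⟨y, hxy⟩
      exact hik (congrArg Sigma.fst (hinj hxy)).symm
  · rintro ⟨S, hcard, hclique, hdisj⟩
    let g : ∀ i : Fin t, Fin (p ((i : ℕ) + 1)) → V := fun i x =>
      (S i).equivFin.symm (Fin.castLE (hcard i) x)
    have hg : ∀ i x, g i x ∈ S i := fun i x => ((S i).equivFin.symm _).2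
    have hg_inj : ∀ i, Function.Injective (g i) := fun i =>
      Subtype.val_injective.comp ((S i).equivFin.symm.injective.comp (Fin.castLE_injective _))
    refine ⟨fun a => g a.1 a.2, ?_, ?_⟩
    · rintro ⟨i, x⟩ ⟨k, y⟩ (h : g i x = g k y)
      obtain rfl : i = k := by
        by_contra hik
        exact Finset.disjoint_left.1 (hdisj hik) (hg i x) (h ▸ hg k y)
      rw [hg_inj i h]
    · rintro ⟨i, x⟩ ⟨k, y⟩ ⟨hxy, rfl : i = k⟩
      exact hclique i (hg i x) (hg i y) ((hg_inj i).ne fun h => hxy (h ▸ rfl))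

namespace Hgraph

variable {n t : ℕ} {p : ℕ → ℕ}

/-- What counting leaves of a copy of `K_{p₁} ∪ ⋯ ∪ K_{p_t}` in `H`: clique `i`, of size
`p (i + 1)`, fits into the core and block `b i`, and so do two cliques sharing a block. -/
def IsBlockPlacement (t : ℕ) (p : ℕ → ℕ) (b : Fin t → ℕ) : Prop :=
  (∀ i, 2 ≤ b i ∧ b i ≤ t) ∧ (∀ i : Fin t, p ((i : ℕ) + 1) < p (b i) + p 1) ∧
    ∀ i k : Fin t, i ≠ k → b i = b k → p ((i : ℕ) + 1) + p ((k : ℕ) + 1) < p (b i) + p 1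

lemma add_le_of_lt_of_gaps (hmono : ∀ i j, 1 ≤ i → i ≤ j → j ≤ t → p i ≤ p j)
    (hgap : ∀ i, 2 ≤ i → i ≤ t - 1 → p i + p 1 ≤ p (i + 1) ∨ p (i + 1) = p i)
    {i j : ℕ} (hi : 2 ≤ i) (hij : i ≤ j) (hjt : j ≤ t) (hlt : p i < p j) : p i + p 1 ≤ p j := by
  induction j, hij using Nat.le_induction with
  | base => omega
  | succ j hij ih =>
    have := hmono i j (by omega) hij (by omega)
    rcases hgap j (by omega) (by omega) with h | h
    · omega
    · exact h ▸ ih (by omega) (by omega)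

theorem not_isBlockPlacement (ht : 1 ≤ t)
    (hmono : ∀ i j, 1 ≤ i → i ≤ j → j ≤ t → p i ≤ p j)
    (hgap : ∀ i, 2 ≤ i → i ≤ t - 1 → p i + p 1 ≤ p (i + 1) ∨ p (i + 1) = p i)
    (b : Fin t → ℕ) : ¬ IsBlockPlacement t p b := by
  induction t with
  | zero => omega
  | succ t ih =>
    rintro ⟨hrange, hsingle, hpair⟩
    obtain rfl | ht0 := Nat.eq_zero_or_pos t
    · have := hrange 0
      omega
    obtain ⟨hm2, hmt⟩ := hrange (Fin.last t)
    have hm : p (b (Fin.last t)) = p (t + 1) := by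
      have htop := hsingle (Fin.last t)
      rw [Fin.val_last] at htop
      have := hmono (b (Fin.last t)) (t + 1) (by omega) hmt le_rfl
      by_contra hne
      have := add_le_of_lt_of_gaps hmono hgap hm2 hmt le_rfl (by omega)
      omega
    have halone : ∀ i, i ≠ Fin.last t → b i ≠ b (Fin.last t) := fun i hi hbi => by
      have hshare := hpair (Fin.last t) i hi.symm hbi.symm
      have := hmono 1 ((i : ℕ) + 1) le_rfl (by omega) (by omega)
      rw [Fin.val_last, hm] at hshare
      omega
    -- clique `t` sits alone in a block of size `p (t + 1)`, so the cliques of block `t + 1`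
    -- can move there
    set b' : Fin t → ℕ := fun i => if b i.castSucc = t + 1 then b (Fin.last t) else b i.castSucc
    have hpb' : ∀ i, p (b' i) = p (b i.castSucc) := fun i => by
      simp only [b']; split_ifs with h <;> simp [h, hm]
    have hb'eq : ∀ i k, b' i = b' k → b i.castSucc = b k.castSucc := fun i k h => by
      have hi := halone i.castSucc (Fin.castSucc_ne_last i)
      have hk := halone k.castSucc (Fin.castSucc_ne_last k)
      simp only [b'] at h; split_ifs at h <;> omega
    refine ih ht0 (fun i j h1 h2 h3 => hmono i j h1 h2 (by omega))
      (fun i h1 h2 => hgap i h1 (by omega)) b' ⟨fun i => ?_, fun i => ?_, fun i k hik h => ?_⟩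
    · have := hrange i.castSucc
      have := halone i.castSucc (Fin.castSucc_ne_last i)
      simp only [b']; split_ifs <;> omega
    · simpa [hpb'] using hsingle i.castSucc
    · simpa [hpb'] using hpair _ _ (Fin.castSucc_injective _ |>.ne hik) (hb'eq i k h)

def core (p : ℕ → ℕ) : Finset ℕ := range (p 1 - 2)

def block (p : ℕ → ℕ) (m : ℕ) : Finset ℕ := Ico (blockStart p m) (blockStart p m + (p m + 1))

lemma mem_core {a : ℕ} : a ∈ core p ↔ a < p 1 - 2 := mem_range

lemma mem_block {m a : ℕ} : a ∈ block p m ↔ inBlock p m a := mem_Ico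

lemma card_core : #(core p) = p 1 - 2 := card_range _

lemma card_block (m : ℕ) : #(block p m) = p m + 1 := by simp [block]

lemma blockStart_succ {m : ℕ} (hm : 2 ≤ m) : blockStart p (m + 1) = blockStart p m + (p m + 1) := by
  rw [blockStart, blockStart, sum_Ico_succ_top hm, add_assoc]

lemma blockStart_mono {j k : ℕ} (h : j ≤ k) : blockStart p j ≤ blockStart p k :=
  Nat.add_le_add_left (sum_le_sum_of_subset (Ico_subset_Ico le_rfl h)) _

lemma core_le_blockStart {m : ℕ} (hm : 2 ≤ m) : p 1 - 2 ≤ blockStart p m :=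
  (blockStart_mono (p := p) hm).trans' (by simp [blockStart])

lemma blockStart_add_le {j k : ℕ} (hj : 2 ≤ j) (hjk : j < k) :
    blockStart p j + (p j + 1) ≤ blockStart p k :=
  blockStart_succ hj ▸ blockStart_mono hjk

lemma disjoint_core_block {m : ℕ} (hm : 2 ≤ m) : Disjoint (core p) (block p m) := by
  have := core_le_blockStart (p := p) hm
  simp only [Finset.disjoint_left, mem_core, block, mem_Ico]
  omega

lemma disjoint_block {j k : ℕ} (hj : 2 ≤ j) (hk : 2 ≤ k) (hjk : j ≠ k) :
    Disjoint (block p j) (block p k) := by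
  simp only [Finset.disjoint_left, block, mem_Ico]
  rcases hjk.lt_or_gt with h | h
  · have := blockStart_add_le (p := p) hj h; omega
  · have := blockStart_add_le (p := p) hk h; omega

lemma eq_of_mem_block {j k a : ℕ} (hj : 2 ≤ j) (hk : 2 ≤ k) (haj : a ∈ block p j)
    (hak : a ∈ block p k) : j = k :=
  by_contra fun hjk => Finset.disjoint_left.1 (disjoint_block hj hk hjk) haj hak

lemma lt_of_mem_core_union_block {m a : ℕ} (hm : 2 ≤ m) (hmt : m ≤ t)
    (ha : a ∈ core p ∪ block p m) : a < blockStart p (t + 1) := by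
  have := core_le_blockStart (p := p) hm
  have := blockStart_add_le (p := p) hm (by omega : m < t + 1)
  simp only [mem_union, mem_core, block, mem_Ico] at ha
  omega

lemma adj_iff {u v : Fin n} : (Hgraph n t p).Adj u v ↔ u ≠ v ∧ ((u : ℕ) ∈ core p ∨
    (v : ℕ) ∈ core p ∨ ∃ m, 2 ≤ m ∧ m ≤ t ∧ (u : ℕ) ∈ block p m ∧ (v : ℕ) ∈ block p m) := by
  simp only [Hgraph, fromRel_adj, mem_core, mem_block]
  grind

lemma adj_of_mem_core_union_block {m : ℕ} (hm : 2 ≤ m) (hmt : m ≤ t) {u v : Fin n}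
    (hu : (u : ℕ) ∈ core p ∪ block p m) (hv : (v : ℕ) ∈ core p ∪ block p m) (huv : u ≠ v) :
    (Hgraph n t p).Adj u v := by
  rw [mem_union] at hu hv
  rw [adj_iff]
  grind

lemma cliqueUnion_isSubgraphOf_of_natCliques {G : SimpleGraph (Fin n)} (A : Fin t → Finset ℕ)
    (hA : ∀ i, A i ⊆ range n) (hcard : ∀ i : Fin t, p ((i : ℕ) + 1) ≤ #(A i))
    (hclique : ∀ i (u v : Fin n), (u : ℕ) ∈ A i → (v : ℕ) ∈ A i → u ≠ v → G.Adj u v)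
    (hdisj : Pairwise fun i k => Disjoint (A i) (A k)) : IsSubgraphOf (cliqueUnion t p) G := by
  have hlt : ∀ i, ∀ a ∈ A i, a < n := fun i a ha => mem_range.1 (hA i ha)
  refine (cliqueUnion_isSubgraphOf_iff G).2
    ⟨fun i => (A i).attachFin (hlt i), fun i => ?_, fun i u hu v hv => ?_, fun i k hik => ?_⟩
  · rw [card_attachFin]; exact hcard i
  · simp only [coe_attachFin, Set.mem_preimage, mem_coe] at hu hv
    exact hclique i u v hu hv
  · simp only [Finset.disjoint_left, mem_attachFin]
    exact fun a ha hb => Finset.disjoint_left.1 (hdisj hik) ha hb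

lemma exists_block_of_isClique {s : Finset (Fin n)} (hs : (Hgraph n t p).IsClique (s : Set (Fin n)))
    (hcard : p 1 - 2 + 2 ≤ #s) :
    ∃ m, 2 ≤ m ∧ m ≤ t ∧ ∀ w ∈ s, (w : ℕ) ∈ core p ∪ block p m := by
  classical
  have houter : 1 < #(s.filter fun w : Fin n => (w : ℕ) ∉ core p) := by
    have hin : #(s.filter fun w : Fin n => (w : ℕ) ∈ core p) ≤ p 1 - 2 :=
      card_core (p := p) ▸ card_le_card_of_injOn Fin.val (fun w hw => (mem_filter.1 hw).2)
        Fin.val_injective.injOn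
    have := card_filter_add_card_filter_not (s := s) (fun w : Fin n => (w : ℕ) ∈ core p)
    omega
  obtain ⟨w₁, hw₁, w₂, hw₂, hne⟩ := one_lt_card.1 houter
  rw [mem_filter] at hw₁ hw₂
  have block_of_adj : ∀ {w w' : Fin n}, (w : ℕ) ∉ core p → (w' : ℕ) ∉ core p →
      (Hgraph n t p).Adj w w' → ∃ m, 2 ≤ m ∧ m ≤ t ∧ (w : ℕ) ∈ block p m ∧ (w' : ℕ) ∈ block p m :=
    fun hw hw' hadj => by
      rcases (adj_iff.1 hadj).2 with h | h | h
      exacts [absurd h hw, absurd h hw', h]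
  obtain ⟨m, hm2, hmt, hm₁, -⟩ := block_of_adj hw₁.2 hw₂.2 (hs hw₁.1 hw₂.1 hne)
  refine ⟨m, hm2, hmt, fun w hw => ?_⟩
  by_cases hwc : (w : ℕ) ∈ core p
  · exact mem_union_left _ hwc
  by_cases hww : w = w₁
  · exact mem_union_right _ (hww ▸ hm₁)
  obtain ⟨m', hm'2, -, hm', hm'₁⟩ := block_of_adj hwc hw₁.2 (hs hw hw₁.1 hww)
  exact mem_union_right _ (eq_of_mem_block hm'2 hm2 hm'₁ hm₁ ▸ hm')

theorem cliqueUnion_not_isSubgraphOf (ht : 1 ≤ t) (hp1 : 2 ≤ p 1)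
    (hmono : ∀ i j, 1 ≤ i → i ≤ j → j ≤ t → p i ≤ p j)
    (hgap : ∀ i, 2 ≤ i → i ≤ t - 1 → p i + p 1 ≤ p (i + 1) ∨ p (i + 1) = p i) :
    ¬ IsSubgraphOf (cliqueUnion t p) (Hgraph n t p) := by
  rw [cliqueUnion_isSubgraphOf_iff]
  rintro ⟨S, hcard, hclique, hdisj⟩
  have hsize : ∀ i : Fin t, p 1 ≤ #(S i) := fun i =>
    (hmono 1 ((i : ℕ) + 1) le_rfl (by omega) i.isLt).trans (hcard i)
  choose b hb2 hbt hb using fun i =>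
    exists_block_of_isClique (hclique i) (by have := hsize i; omega)
  have hfit : ∀ m (s : Finset (Fin n)), (∀ w ∈ s, (w : ℕ) ∈ core p ∪ block p m) →
      #s < p m + p 1 := fun m s hs => by
    have := card_le_card_of_injOn Fin.val hs Fin.val_injective.injOn
    have := card_union_le (core p) (block p m)
    rw [card_core, card_block] at this
    omega
  refine not_isBlockPlacement ht hmono hgap b
    ⟨fun i => ⟨hb2 i, hbt i⟩, fun i => (hcard i).trans_lt (hfit _ _ (hb i)), fun i k hik hbik => ?_⟩
  have hunion := hfit (b i) (S i ∪ S k) fun w hw => by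
    rcases mem_union.1 hw with h | h
    exacts [hb i w h, hbik ▸ hb k w h]
  rw [card_union_of_disjoint (hdisj hik)] at hunion
  have := hcard i
  have := hcard k
  omega

lemma disjoint_of_subset_core_union_block {A B : Finset ℕ} {j k : ℕ} (hj : 2 ≤ j) (hk : 2 ≤ k)
    (hjk : j ≠ k) (hA : A ⊆ core p ∪ block p j) (hB : B ⊆ block p k) : Disjoint A B :=
  (disjoint_union_left.2 ⟨disjoint_core_block hk, disjoint_block hj hk hjk⟩).mono hA hB

lemma cliqueUnion_isSubgraphOf_of_subset_core_union_block (hn : blockStart p (t + 1) ≤ n)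
    (A : Fin t → Finset ℕ) (β : Fin t → ℕ) (hβ : ∀ i, 2 ≤ β i ∧ β i ≤ t)
    (hsub : ∀ i, A i ⊆ core p ∪ block p (β i)) (hcard : ∀ i : Fin t, p ((i : ℕ) + 1) ≤ #(A i))
    (hdisj : Pairwise fun i k => Disjoint (A i) (A k)) :
    IsSubgraphOf (cliqueUnion t p) (Hgraph n t p) :=
  cliqueUnion_isSubgraphOf_of_natCliques A
    (fun i _ ha => mem_range.2 <|
      (lt_of_mem_core_union_block (hβ i).1 (hβ i).2 (hsub i ha)).trans_le hn)
    hcard (fun i _ _ hx hy hxy =>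
      adj_of_mem_core_union_block (hβ i).1 (hβ i).2 (hsub i hx) (hsub i hy) hxy)
    hdisj

lemma sup_edge_adj_of_mem_core_pair {u v x y : Fin n} (hx : (x : ℕ) ∈ core p ∪ {(u : ℕ), (v : ℕ)})
    (hy : (y : ℕ) ∈ core p ∪ {(u : ℕ), (v : ℕ)}) (hxy : x ≠ y) :
    (Hgraph n t p ⊔ fromEdgeSet {s(u, v)}).Adj x y := by
  by_cases hxc : (x : ℕ) ∈ core p
  · exact Or.inl (adj_iff.2 ⟨hxy, Or.inl hxc⟩)
  by_cases hyc : (y : ℕ) ∈ core p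
  · exact Or.inl (adj_iff.2 ⟨hxy, Or.inr (Or.inl hyc)⟩)
  simp only [mem_union, mem_insert, mem_singleton, ← Fin.ext_iff, hxc, hyc, false_or] at hx hy
  refine Or.inr ((fromEdgeSet_adj _).2 ⟨?_, hxy⟩)
  rcases hx with rfl | rfl <;> rcases hy with rfl | rfl
  all_goals first | exact absurd rfl hxy | simp [Sym2.eq_swap]

theorem cliqueUnion_isSubgraphOf_sup_edge (hn : blockStart p (t + 1) ≤ n) {u v : Fin n}
    (huv : u ≠ v) (hadj : ¬ (Hgraph n t p).Adj u v) :
    IsSubgraphOf (cliqueUnion t p) (Hgraph n t p ⊔ fromEdgeSet {s(u, v)}) := by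
  have hu : (u : ℕ) ∉ core p := fun h => hadj (adj_iff.2 ⟨huv, Or.inl h⟩)
  have hv : (v : ℕ) ∉ core p := fun h => hadj (adj_iff.2 ⟨huv, Or.inr (Or.inl h)⟩)
  have hsep : ∀ m, 2 ≤ m → m ≤ t → ¬ ((u : ℕ) ∈ block p m ∧ (v : ℕ) ∈ block p m) :=
    fun m hm2 hmt huvm => hadj (adj_iff.2 ⟨huv, Or.inr (Or.inr ⟨m, hm2, hmt, huvm⟩)⟩)
  let A : Fin t → Finset ℕ := fun i =>
    if (i : ℕ) = 0 then core p ∪ {(u : ℕ), (v : ℕ)} else block p (i + 1) \ {(u : ℕ), (v : ℕ)}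
  have hA₀ : ∀ i : Fin t, (i : ℕ) = 0 → A i = core p ∪ {(u : ℕ), (v : ℕ)} := fun _ hi => if_pos hi
  have hA : ∀ i : Fin t, (i : ℕ) ≠ 0 → A i = block p (i + 1) \ {(u : ℕ), (v : ℕ)} :=
    fun _ hi => if_neg hi
  refine cliqueUnion_isSubgraphOf_of_natCliques A (fun i a ha => ?_) (fun i => ?_)
    (fun i x y hx hy hxy => ?_) (fun i k hik => ?_)
  · rw [mem_range]
    by_cases hi : (i : ℕ) = 0
    · rw [hA₀ i hi, mem_union, mem_insert, mem_singleton] at ha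
      rcases ha with ha | rfl | rfl
      exacts [(mem_core.1 ha).trans_le ((core_le_blockStart (by omega)).trans hn), u.isLt, v.isLt]
    · rw [hA i hi] at ha
      exact (lt_of_mem_core_union_block (by omega) i.isLt
        (mem_union_right _ (mem_sdiff.1 ha).1)).trans_le hn
  · by_cases hi : (i : ℕ) = 0
    · rw [hA₀ i hi, card_union_of_disjoint (disjoint_insert_right.2 ⟨hu,
        disjoint_singleton_right.2 hv⟩), card_core, card_pair (Fin.val_ne_of_ne huv), hi, zero_add]
      omega
    · have := card_le_card_sdiff_pair_add_one (hsep (i + 1) (by omega) i.isLt)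
      rw [card_block] at this
      rw [hA i hi]
      omega
  · by_cases hi : (i : ℕ) = 0
    · rw [hA₀ i hi] at hx hy
      exact sup_edge_adj_of_mem_core_pair hx hy hxy
    · rw [hA i hi] at hx hy
      exact Or.inl (adj_of_mem_core_union_block (by omega) i.isLt
        (mem_union_right _ (mem_sdiff.1 hx).1) (mem_union_right _ (mem_sdiff.1 hy).1) hxy)
  · show Disjoint (A i) (A k)
    have hik' : (i : ℕ) ≠ k := Fin.val_ne_of_ne hik
    by_cases hi : (i : ℕ) = 0
    · rw [hA₀ i hi, hA k (by omega)]
      exact disjoint_union_left.2 ⟨(disjoint_core_block (by omega)).mono_right sdiff_subset,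
        disjoint_sdiff⟩
    by_cases hk : (k : ℕ) = 0
    · rw [hA₀ k hk, hA i hi]
      exact disjoint_union_right.2 ⟨(disjoint_core_block (by omega)).symm.mono_left sdiff_subset,
        sdiff_disjoint⟩
    rw [hA i hi, hA k hk]
    exact disjoint_of_subset_core_union_block (by omega) (by omega) (by omega)
      (sdiff_subset.trans subset_union_right) sdiff_subset

theorem cliqueUnion_isSubgraphOf_of_small_jump (hn : blockStart p (t + 1) ≤ n) {i₀ : ℕ}
    (hi₀ : 2 ≤ i₀) (hi₀t : i₀ + 1 ≤ t) (hlt : p i₀ < p (i₀ + 1))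
    (hjump : p (i₀ + 1) < p i₀ + p 1) :
    IsSubgraphOf (cliqueUnion t p) (Hgraph n t p) := by
  set s := blockStart p i₀
  set d := p (i₀ + 1) - p i₀
  have hs' : blockStart p (i₀ + 1) = s + (p i₀ + 1) := blockStart_succ hi₀
  have hcore : p 1 - 2 ≤ s := core_le_blockStart hi₀
  have hd : p (i₀ + 1) = p i₀ + d := by omega
  -- `K_{p₁}` takes the top `d + 1` vertices of block `i₀ + 1` and `p₁ - d - 1` core vertices,
  -- `K_{p_{i₀}}` the rest of block `i₀ + 1`,
  -- `K_{p_{i₀+1}}` block `i₀` and the other `d - 1` core vertices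
  let A : Fin t → Finset ℕ := fun i =>
    if (i : ℕ) = 0 then
      Ico (d - 1) (p 1 - 2) ∪ Ico (s + p i₀ + 1 + p i₀) (s + p i₀ + 1 + p i₀ + (d + 1))
    else if (i : ℕ) + 1 = i₀ then Ico (s + p i₀ + 1) (s + p i₀ + 1 + p i₀)
    else if (i : ℕ) = i₀ then range (d - 1) ∪ block p i₀
    else block p (i + 1)
  let β : Fin t → ℕ := fun i =>
    if (i : ℕ) = 0 ∨ (i : ℕ) + 1 = i₀ then i₀ + 1 else if (i : ℕ) = i₀ then i₀ else i + 1
  have hβ : ∀ i, 2 ≤ β i ∧ β i ≤ t := fun i => by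
    simp only [β]; split_ifs <;> omega
  have hsub : ∀ i, A i ⊆ core p ∪ block p (β i) := fun i a ha => by
    simp only [A, β] at ha ⊢
    split_ifs at ha ⊢ <;>
      simp only [block, hs', mem_union, mem_core, mem_Ico, mem_range] at ha ⊢ <;> omega
  have hgeneric : ∀ i : Fin t, ¬ ((i : ℕ) = 0 ∨ (i : ℕ) + 1 = i₀ ∨ (i : ℕ) = i₀) →
      A i = block p (β i) ∧ ∀ k : Fin t, (k : ℕ) ≠ i → β k ≠ β i := fun i hi => by
    refine ⟨by simp only [A, β]; split_ifs <;> simp_all, fun k hki => ?_⟩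
    simp only [β]; split_ifs <;> omega
  refine cliqueUnion_isSubgraphOf_of_subset_core_union_block hn A β hβ hsub (fun i => ?_)
    (fun i k hik => ?_)
  · simp only [A]
    split_ifs with h₀ h₁ h₂
    · rw [card_union_of_disjoint (disjoint_left.2 fun a ha hb => by simp at ha hb; omega)]
      simp [h₀]; omega
    · simp [h₁]
    · rw [card_union_of_disjoint (disjoint_left.2 fun a ha hb => by
        simp [block] at ha hb; omega), card_range, card_block, h₂]
      omega
    · simp [card_block]
  · show Disjoint (A i) (A k)
    have hik' : (i : ℕ) ≠ k := Fin.val_ne_of_ne hik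
    by_cases hk : (k : ℕ) = 0 ∨ (k : ℕ) + 1 = i₀ ∨ (k : ℕ) = i₀
    · by_cases hi : (i : ℕ) = 0 ∨ (i : ℕ) + 1 = i₀ ∨ (i : ℕ) = i₀
      · simp only [A, Finset.disjoint_left]
        intro a
        split_ifs <;> simp only [block, mem_union, mem_Ico, mem_range] <;> omega
      · obtain ⟨hAi, hβi⟩ := hgeneric i hi
        exact (disjoint_of_subset_core_union_block (hβ k).1 (hβ i).1 (hβi k hik'.symm) (hsub k)
          hAi.le).symm
    · obtain ⟨hAk, hβk⟩ := hgeneric k hk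
      exact disjoint_of_subset_core_union_block (hβ i).1 (hβ k).1 (hβk i hik') (hsub i) hAk.le

end Hgraph

/-- `H(n; p₁, …, p_t)` is `(K_{p₁} ∪ ⋯ ∪ K_{p_t})`-saturated iff for every
`2 ≤ i ≤ t-1`, either `p_{i+1} - p_i ≥ p₁` or `p_{i+1} = p_i`. -/
theorem Hgraph_saturated_iff (n t : ℕ) (p : ℕ → ℕ) (ht : 2 ≤ t) (hp1 : 2 ≤ p 1)
    (hmono : ∀ i j, 1 ≤ i → i ≤ j → j ≤ t → p i ≤ p j)
    (hfit : blockStart p (t + 1) + 1 ≤ n) :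
    IsSat (Hgraph n t p) (cliqueUnion t p) ↔
      ∀ i, 2 ≤ i → i ≤ t - 1 → (p i + p 1 ≤ p (i + 1) ∨ p (i + 1) = p i) := by
  have hn : blockStart p (t + 1) ≤ n := by omega
  constructor
  · intro hsat i hi hit
    by_contra! hjump
    have := hmono i (i + 1) (by omega) (by omega) (by omega)
    exact hsat.1 <| Hgraph.cliqueUnion_isSubgraphOf_of_small_jump hn hi (by omega)
      (by omega) hjump.1
  · intro hgap
    exact ⟨Hgraph.cliqueUnion_not_isSubgraphOf (by omega) hp1 hmono hgap,
      fun u v huv hadj => Hgraph.cliqueUnion_isSubgraphOf_sup_edge hn huv hadj⟩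
end

section
/- Suppose t ≥ 2, n > 3(p_1 - 2) + Σ_{i=2}^t p_i(p_i + 1), G is a (K_{p_1} ∪ ... ∪ K_{p_t})-saturated graph of order n with e(G) ≤ e(H(n; p_1, ..., p_t)), and v is a vertex of minimum degree in G. Then d_G(v) = p_1 - 2. -/
/-!
Write `q = p₁ - 2`, `T = ∑_{i ≥ 2} p_i (p_i + 1)` and `δ = d_G(v)`. Since
`2e(H) ≤ 2qn + T - q(q + 1)`, averaging degrees yields `nδ ≤ 2e(G) ≤ 2qn + T`, whence `δ ≤ 2q`
as `n > T`.

Adding a missing edge `vu` creates a copy of some `K_{p_i}` through `vu`; its other `p_i - 2 ≥ q`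
vertices are common neighbours of `v` and `u` spanning a clique. So `δ ≥ q`, and if `δ > q`,
counting degrees around `N(v)` bounds `2e(G)` from below by a quantity that exceeds the upper
bound once `n > 3q + T`.
-/

open SimpleGraph Finset

namespace SimpleGraph

variable {V : Type*} [Fintype V] (G : SimpleGraph V) [DecidableRel G.Adj]

lemma card_filter_adj_le_degree (a : V) (s : Finset V) : #{w ∈ s | G.Adj a w} ≤ G.degree a := by
  rw [← card_neighborFinset_eq_degree]
  exact card_le_card fun w hw => (G.mem_neighborFinset a w).2 (mem_filter.1 hw).2

lemma two_mul_card_edgeFinset_eq_card_adj [DecidableEq V] :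
    2 * #G.edgeFinset = #{x : V × V | G.Adj x.1 x.2} := by
  rw [← dart_card_eq_twice_card_edges, ← Fintype.card_subtype]
  exact Fintype.card_congr ⟨fun d => ⟨d.toProd, d.adj⟩, fun x => ⟨x.1, x.2⟩,
    fun _ => rfl, fun _ => rfl⟩

variable [DecidableEq V]

/-- Double counting the edges at `N(v)`: `v` sends `deg v` of them, every other vertex outside
`N(v)` at least `q`, and the `q`-clique inside `N(v)` another `q(q-1)`. -/
lemma le_sum_degree_neighborFinset (v : V) {Q : Finset V} {q : ℕ}
    (hQv : Q ⊆ G.neighborFinset v) (hQ : G.IsClique (Q : Set V)) (hQq : #Q = q)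
    (hout : ∀ b, b ≠ v → ¬ G.Adj v b → q ≤ #{a ∈ G.neighborFinset v | G.Adj a b}) :
    G.degree v + (Fintype.card V - G.degree v - 1) * q + q * (q - 1)
      ≤ ∑ a ∈ G.neighborFinset v, G.degree a := by
  set A := G.neighborFinset v
  have hv : v ∈ Aᶜ := by simp [A]
  have houter : G.degree v + (Fintype.card V - G.degree v - 1) * q
      ≤ ∑ b ∈ Aᶜ, #{a ∈ A | G.Adj a b} := by
    have hAv : #{a ∈ A | G.Adj a v} = G.degree v := by
      rw [filter_true_of_mem fun a ha => ((G.mem_neighborFinset v a).1 ha).symm,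
        card_neighborFinset_eq_degree]
    have hcard : #(Aᶜ.erase v) = Fintype.card V - G.degree v - 1 := by
      rw [card_erase_of_mem hv, card_compl, card_neighborFinset_eq_degree]
    rw [← add_sum_erase _ _ hv, hAv, ← hcard, ← smul_eq_mul]
    refine Nat.add_le_add_left (card_nsmul_le_sum _ _ _ fun b hb => ?_) _
    exact hout b (ne_of_mem_erase hb) (by simpa [A] using mem_of_mem_erase hb)
  have hinner : q * (q - 1) ≤ ∑ w ∈ Q, #{a ∈ A | G.Adj a w} := by
    rw [← hQq, ← smul_eq_mul]
    refine card_nsmul_le_sum _ _ _ fun w hw => ?_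
    rw [← card_erase_of_mem hw]
    exact card_le_card fun a ha => mem_filter.2
      ⟨hQv (mem_of_mem_erase ha), hQ (mem_of_mem_erase ha) hw (ne_of_mem_erase ha)⟩
  calc _ ≤ ∑ b ∈ Aᶜ ∪ Q, #{a ∈ A | G.Adj a b} := by
        rw [sum_union (disjoint_compl_left.mono_right hQv)]
        omega
    _ = ∑ a ∈ A, #{b ∈ Aᶜ ∪ Q | G.Adj a b} :=
        (sum_card_bipartiteAbove_eq_sum_card_bipartiteBelow _).symm
    _ ≤ _ := sum_le_sum fun a _ => G.card_filter_adj_le_degree a _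

lemma le_sum_degrees_of_isClique (v : V) (hmin : ∀ u, G.degree v ≤ G.degree u)
    {Q : Finset V} {q : ℕ} (hQv : Q ⊆ G.neighborFinset v) (hQ : G.IsClique (Q : Set V))
    (hQq : #Q = q)
    (hout : ∀ b, b ≠ v → ¬ G.Adj v b → q ≤ #{a ∈ G.neighborFinset v | G.Adj a b}) :
    (Fintype.card V - G.degree v) * G.degree v
        + (G.degree v + (Fintype.card V - G.degree v - 1) * q + q * (q - 1))
      ≤ ∑ u, G.degree u := by
  have hcompl : (Fintype.card V - G.degree v) * G.degree v
      ≤ ∑ u ∈ (G.neighborFinset v)ᶜ, G.degree u := by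
    rw [← card_neighborFinset_eq_degree, ← card_compl, ← smul_eq_mul]
    exact card_nsmul_le_sum _ _ _ fun u _ => hmin u
  rw [← sum_add_sum_compl (G.neighborFinset v), add_comm]
  exact Nat.add_le_add (G.le_sum_degree_neighborFinset v hQv hQ hQq hout) hcompl

end SimpleGraph

lemma exists_embedding_through_of_isSat {α β : Type*} {G : SimpleGraph α}
    {F : SimpleGraph β} (hsat : IsSat G F) {u v : α} (huv : u ≠ v) (h : ¬ G.Adj u v) :
    ∃ f : β → α, Function.Injective f ∧ ∃ a b, F.Adj a b ∧ f a = u ∧ f b = v ∧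
      ∀ c d, F.Adj c d → c ≠ a → c ≠ b → G.Adj (f c) (f d) := by
  obtain ⟨f, hf, hadj⟩ := hsat.2 u v huv h
  have hnew : ∀ c d, F.Adj c d → G.Adj (f c) (f d) ∨ s(f c, f d) = s(u, v) := by
    intro c d hcd
    have hcd' := hadj c d hcd
    rw [sup_adj, fromEdgeSet_adj, Set.mem_singleton_iff] at hcd'
    exact hcd'.imp_right And.left
  have hthrough : ∃ a b, F.Adj a b ∧ f a = u ∧ f b = v := by
    by_contra! hnone
    refine hsat.1 ⟨f, hf, fun c d hcd => (hnew c d hcd).resolve_right fun he => ?_⟩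
    rcases Sym2.eq_iff.1 he with ⟨hc, hd⟩ | ⟨hc, hd⟩
    · exact hnone c d hcd hc hd
    · exact hnone d c hcd.symm hd hc
  obtain ⟨a, b, hab, rfl, rfl⟩ := hthrough
  refine ⟨f, hf, a, b, hab, rfl, rfl, fun c d hcd hca hcb => (hnew c d hcd).resolve_right ?_⟩
  rw [Sym2.eq_iff]
  rintro (⟨hc, -⟩ | ⟨hc, -⟩)
  exacts [hca (hf hc), hcb (hf hc)]

lemma exists_clique_of_isSat_cliqueUnion {α : Type*} {G : SimpleGraph α} {t : ℕ}
    {p : ℕ → ℕ} (hsat : IsSat G (cliqueUnion t p)) {u v : α} (huv : u ≠ v)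
    (h : ¬ G.Adj u v) :
    ∃ i : Fin t, ∃ Q : Finset α, #Q = p ((i : ℕ) + 1) - 2 ∧ G.IsClique (Q : Set α) ∧
      ∀ w ∈ Q, G.Adj u w ∧ G.Adj v w := by
  classical
  obtain ⟨f, hf, ⟨i, x⟩, ⟨j, y⟩, ⟨hab, hij⟩, rfl, rfl, hG⟩ :=
    exists_embedding_through_of_isSat hsat huv h
  obtain rfl : i = j := hij
  have hmk : Function.Injective (Sigma.mk (β := fun k : Fin t => Fin (p ((k : ℕ) + 1))) i) :=
    sigma_mk_injective
  have hxy : x ≠ y := fun h => hab (h ▸ rfl)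
  have hadj : ∀ z z', z ≠ z' → (cliqueUnion t p).Adj ⟨i, z⟩ ⟨i, z'⟩ :=
    fun z z' h => ⟨hmk.ne h, rfl⟩
  refine ⟨i, ((univ.erase x).erase y).image (f ∘ Sigma.mk i), ?_, ?_, ?_⟩
  · rw [card_image_of_injective _ (hf.comp hmk), card_erase_of_mem (by simp [hxy.symm]),
      card_erase_of_mem (mem_univ x), card_univ, Fintype.card_fin, Nat.sub_sub]
  · intro w hw w' hw' hne
    simp only [coe_image, Set.mem_image, mem_coe, mem_erase] at hw hw'
    obtain ⟨z, ⟨hzy, hzx, -⟩, rfl⟩ := hw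
    obtain ⟨z', -, rfl⟩ := hw'
    exact hG _ _ (hadj z z' fun h => hne (h ▸ rfl)) (hmk.ne hzx) (hmk.ne hzy)
  · simp only [mem_image, mem_erase]
    rintro _ ⟨z, ⟨hzy, hzx, -⟩, rfl⟩
    exact ⟨(hG _ _ (hadj z x hzx) (hmk.ne hzx) (hmk.ne hzy)).symm,
      (hG _ _ (hadj z y hzy) (hmk.ne hzx) (hmk.ne hzy)).symm⟩

lemma exists_clique_card_eq_of_isSat_cliqueUnion {α : Type*} {G : SimpleGraph α} {t : ℕ}
    {p : ℕ → ℕ} (hmono : ∀ i j, 1 ≤ i → i ≤ j → j ≤ t → p i ≤ p j)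
    (hsat : IsSat G (cliqueUnion t p)) {u v : α} (huv : u ≠ v) (h : ¬ G.Adj u v) :
    ∃ Q : Finset α, #Q = p 1 - 2 ∧ G.IsClique (Q : Set α) ∧
      ∀ w ∈ Q, G.Adj u w ∧ G.Adj v w := by
  obtain ⟨i, Q, hQ, hclique, hnbr⟩ := exists_clique_of_isSat_cliqueUnion hsat huv h
  have hle : p 1 - 2 ≤ #Q :=
    hQ ▸ Nat.sub_le_sub_right (hmono _ _ le_rfl (by omega) (by omega)) 2
  obtain ⟨R, hRQ, hR⟩ := exists_subset_card_eq hle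
  exact ⟨R, hR, hclique.subset (by simpa), fun w hw => hnbr w (hRQ hw)⟩

lemma le_card_filter_adj_of_isSat_cliqueUnion {V : Type*} [Fintype V] {G : SimpleGraph V}
    [DecidableRel G.Adj] {t : ℕ} {p : ℕ → ℕ}
    (hmono : ∀ i j, 1 ≤ i → i ≤ j → j ≤ t → p i ≤ p j)
    (hsat : IsSat G (cliqueUnion t p)) {u v : V} (huv : u ≠ v) (h : ¬ G.Adj u v) :
    p 1 - 2 ≤ #{a ∈ G.neighborFinset u | G.Adj a v} := by
  obtain ⟨Q, hQ, -, hnbr⟩ := exists_clique_card_eq_of_isSat_cliqueUnion hmono hsat huv h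
  exact hQ.ge.trans <| card_le_card fun w hw =>
    mem_filter.2 ⟨(G.mem_neighborFinset u w).2 (hnbr w hw).1, (hnbr w hw).2.symm⟩

instance (p : ℕ → ℕ) (i a : ℕ) : Decidable (inBlock p i a) :=
  inferInstanceAs (Decidable (_ ∧ _))

def block (n : ℕ) (p : ℕ → ℕ) (i : ℕ) : Finset (Fin n) := {a | inBlock p i a}

lemma card_block_le (n : ℕ) (p : ℕ → ℕ) (i : ℕ) : #(block n p i) ≤ p i + 1 := by
  calc #(block n p i)
      ≤ #(Ico (blockStart p i) (blockStart p i + (p i + 1))) :=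
        card_le_card_of_injOn Fin.val (fun a ha => by
          simpa [inBlock] using (mem_filter.1 (mem_coe.1 ha)).2)
          Fin.val_injective.injOn
    _ = p i + 1 := by simp

lemma card_offDiag_block_le (n : ℕ) (p : ℕ → ℕ) (i : ℕ) :
    #(block n p i).offDiag ≤ p i * (p i + 1) := by
  have h := card_block_le n p i
  rw [offDiag_card, ← Nat.mul_sub_one]
  calc _ ≤ (p i + 1) * (p i + 1 - 1) := Nat.mul_le_mul h (Nat.sub_le_sub_right h 1)
    _ = p i * (p i + 1) := by rw [Nat.add_sub_cancel, Nat.mul_comm]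

/-- Counting ordered adjacent pairs: those meeting the first `p₁ - 2` vertices number
`n(n-1) - (n-q)(n-q-1) = 2qn - q(q+1)`, the others lie inside a block. -/
lemma two_mul_card_edgeSet_Hgraph_add_le (n t : ℕ) (p : ℕ → ℕ) (hq : p 1 - 2 ≤ n) :
    2 * (Hgraph n t p).edgeSet.ncard + (p 1 - 2) * (p 1 - 2 + 1)
      ≤ 2 * ((p 1 - 2) * n) + ∑ i ∈ Icc 2 t, p i * (p i + 1) := by
  classical
  set q := p 1 - 2
  set L : Finset (Fin n) := {a | (a : ℕ) < q}
  have hL : #Lᶜ = n - q := by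
    rw [card_compl, Fintype.card_fin, Fin.card_filter_val_lt, min_eq_right hq]
  have hadj_subset : ({x : Fin n × Fin n | (Hgraph n t p).Adj x.1 x.2} : Finset _)
      ⊆ (univ.offDiag \ Lᶜ.offDiag) ∪ (Icc 2 t).biUnion fun i => (block n p i).offDiag := by
    rintro ⟨a, b⟩ hab
    simp only [mem_filter, mem_univ, true_and, Hgraph, fromRel_adj] at hab
    simp only [mem_union, mem_sdiff, mem_offDiag, mem_univ, true_and, mem_compl, mem_filter,
      not_lt, mem_biUnion, mem_Icc, block, L]
    obtain ⟨hne, (ha | ⟨i, hi, hit, ha, hb⟩) | (hb | ⟨i, hi, hit, hb, ha⟩)⟩ := hab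
    · exact .inl ⟨hne, by omega⟩
    · exact .inr ⟨i, ⟨hi, hit⟩, ha, hb, hne⟩
    · exact .inl ⟨hne, by omega⟩
    · exact .inr ⟨i, ⟨hi, hit⟩, ha, hb, hne⟩
  have hlow : #(univ.offDiag \ Lᶜ.offDiag) + #Lᶜ.offDiag = #(univ : Finset (Fin n)).offDiag :=
    card_sdiff_add_card_eq_card (offDiag_mono (subset_univ Lᶜ))
  have hblocks := (card_biUnion_le (s := Icc 2 t)).trans
    (sum_le_sum fun i _ => card_offDiag_block_le n p i)
  have hsplit := (card_le_card hadj_subset).trans (card_union_le _ _)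
  rw [← coe_edgeFinset, Set.ncard_coe_finset, two_mul_card_edgeFinset_eq_card_adj]
  rw [offDiag_card, offDiag_card, hL, card_univ, Fintype.card_fin] at hlow
  have hmeetL : #(univ.offDiag \ Lᶜ.offDiag) + q * (q + 1) = 2 * (q * n) := by
    obtain ⟨m, rfl⟩ := Nat.exists_eq_add_of_le hq
    rw [Nat.add_sub_cancel_left] at hlow
    zify [Nat.le_mul_self m, Nat.le_mul_self (q + m)] at hlow ⊢
    linear_combination hlow
  omega

lemma sub_two_le_sum_mul_succ {t : ℕ} {p : ℕ → ℕ} (ht : 2 ≤ t)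
    (hmono : ∀ i j, 1 ≤ i → i ≤ j → j ≤ t → p i ≤ p j) :
    p 1 - 2 ≤ ∑ i ∈ Icc 2 t, p i * (p i + 1) :=
  calc p 1 - 2 ≤ p 2 := by have := hmono 1 2 le_rfl (by norm_num) ht; omega
    _ ≤ p 2 * (p 2 + 1) := Nat.le_mul_of_pos_right _ (Nat.succ_pos _)
    _ ≤ _ := single_le_sum (f := fun i => p i * (p i + 1)) (fun _ _ => Nat.zero_le _)
        (mem_Icc.2 ⟨le_rfl, ht⟩)

theorem minDegree_eq_general (n t : ℕ) (p : ℕ → ℕ) (ht : 2 ≤ t)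
    (hmono : ∀ i j, 1 ≤ i → i ≤ j → j ≤ t → p i ≤ p j)
    (hn : 3 * (p 1 - 2) + ∑ i ∈ Finset.Icc 2 t, p i * (p i + 1) < n)
    (G : SimpleGraph (Fin n)) (hsat : IsSat G (cliqueUnion t p))
    (hE : G.edgeSet.ncard ≤ (Hgraph n t p).edgeSet.ncard)
    (v : Fin n)
    (hmin : ∀ u, (G.neighborSet v).ncard ≤ (G.neighborSet u).ncard) :
    (G.neighborSet v).ncard = p 1 - 2 := by
  classical
  have hdeg (u : Fin n) : (G.neighborSet u).ncard = G.degree u := by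
    rw [Set.ncard_eq_toFinset_card', Set.toFinset_card, card_neighborSet_eq_degree]
  simp only [hdeg] at hmin ⊢
  have hH := two_mul_card_edgeSet_Hgraph_add_le n t p (by omega)
  have hqT := sub_two_le_sum_mul_succ ht hmono
  set q := p 1 - 2
  set T := ∑ i ∈ Icc 2 t, p i * (p i + 1)
  set δ := G.degree v
  have hedges : ∑ u, G.degree u + q * (q + 1) ≤ 2 * (q * n) + T := by
    rw [sum_degrees_eq_twice_card_edges, ← Set.ncard_coe_finset, coe_edgeFinset]
    omega
  have hδ : δ ≤ 2 * q := by
    have hsum : n * δ ≤ ∑ u, G.degree u := by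
      simpa using card_nsmul_le_sum univ (fun u => G.degree u) _ fun u _ => hmin u
    nlinarith
  by_contra hne
  obtain ⟨u, hvu, hadj⟩ : ∃ u, v ≠ u ∧ ¬ G.Adj v u := by
    simpa [IsUniversal] using (G.degree_lt_card_sub_one v).1 (by rw [Fintype.card_fin]; omega)
  obtain ⟨Q, hQq, hQ, hQv⟩ := exists_clique_card_eq_of_isSat_cliqueUnion hmono hsat hvu hadj
  replace hQv : Q ⊆ G.neighborFinset v := fun w hw => (G.mem_neighborFinset v w).2 (hQv w hw).1
  have hqδ : q < δ := (hQq.ge.trans (card_le_card hQv)).lt_of_ne (Ne.symm hne)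
  have hcount : (n - δ) * δ + (δ + (n - δ - 1) * q + q * (q - 1)) ≤ ∑ u, G.degree u := by
    simpa using G.le_sum_degrees_of_isClique v hmin hQv hQ hQq fun b hbv hb =>
      le_card_filter_adj_of_isSat_cliqueUnion hmono hsat hbv.symm hb
  -- With `δ = q + k`, `hcount` and `hedges` give `T (k - 1) + 2k ≤ k²`,
  -- impossible as `k ≤ q ≤ T`.
  have hδn : δ ≤ n := by omega
  have hδn' : 1 ≤ n - δ := by omega
  have hq : 1 ≤ q := by omega
  zify [hδn, hδn', hq] at hcount hedges hqδ hqT hn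
  nlinarith [mul_nonneg (by linarith : (0 : ℤ) ≤ T - (δ - q))
      (by linarith : (0 : ℤ) ≤ δ - q - 1),
    mul_nonneg (by linarith : (0 : ℤ) ≤ n - 3 * q - T - 1) (by linarith : (0 : ℤ) ≤ δ - q)]

/-- In a saturated graph with few edges, the minimum degree is `p₁ - 2`. -/
theorem minDegree_eq (n t : ℕ) (p : ℕ → ℕ) (ht : 2 ≤ t) (hp1 : 2 ≤ p 1)
    (hmono : ∀ i j, 1 ≤ i → i ≤ j → j ≤ t → p i ≤ p j)
    (hn : 3 * (p 1 - 2) + ∑ i ∈ Finset.Icc 2 t, p i * (p i + 1) < n)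
    (G : SimpleGraph (Fin n)) (hsat : IsSat G (cliqueUnion t p))
    (hE : G.edgeSet.ncard ≤ (Hgraph n t p).edgeSet.ncard)
    (v : Fin n)
    (hmin : ∀ u, (G.neighborSet v).ncard ≤ (G.neighborSet u).ncard) :
    (G.neighborSet v).ncard = p 1 - 2 :=
  minDegree_eq_general n t p ht hmono hn G hsat hE v hmin
end

section
/- Suppose t ≥ 2, n > 3(p_1 - 2) + Σ_{i=2}^t p_i(p_i+1), G is a (K_{p_1} ∪ ... ∪ K_{p_t})-saturated graph of order n with e(G) ≤ e(H(n; p_1, ..., p_t)), and v is a minimum-degree vertex of G. Then N_G(v) ⊆ N_G(w) for every vertex w outside N_G(v) ∪ {v}. -/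
open SimpleGraph Finset

/-!
Saturation means that two non-adjacent vertices `x, y` span an edge of a copy of
`K_{p_1} ∪ ⋯ ∪ K_{p_t}` in `G + xy`, so the rest of that clique gives them `c = p₁ - 2`
common neighbours forming a clique. If `d(v) ≤ c`, such a clique for `v` and `w` is all of `N(v)`.
Otherwise `c < d(v) ≤ 2c` by the edge bound, and a neighbour `u` of `v` not adjacent to `w`
yields, through the common clique of `u` and `w`, a clique containing `w` outside `N[v]`.
Counting degrees separately on `N(v)` and on `V ∖ N[v]` then gives `G` more edges than
`H(n; p₁, …, p_t)`, whose degree sum is at most `c(n-1) + c(n-c) + ∑ p_i(p_i+1)`.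
-/

lemma Finset.card_sdiff_mul_add_card_mul_le_sum {ι : Type*} {s t : Finset ι} (hts : t ⊆ s)
    {f : ι → ℕ} {a b : ℕ} (ha : ∀ i ∈ s, a ≤ f i) (hb : ∀ i ∈ t, b ≤ f i) :
    (#s - #t) * a + #t * b ≤ ∑ i ∈ s, f i := by
  classical
  rw [← sum_sdiff hts, ← card_sdiff_of_subset hts]
  exact add_le_add (card_nsmul_le_sum _ _ _ fun i hi => ha i (mem_sdiff.1 hi).1)
    (card_nsmul_le_sum _ _ _ hb)

namespace SimpleGraph

variable {α : Type*}

def HasCommonCliques (G : SimpleGraph α) (k : ℕ) : Prop :=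
  ∀ x y, x ≠ y → ¬ G.Adj x y →
    ∃ S : Finset α, G.IsNClique k S ∧ (S : Set α) ⊆ G.commonNeighbors x y

lemma adj_of_adj_sup_edge {G : SimpleGraph α} {x y a b : α} (h : (G ⊔ edge x y).Adj a b)
    (hx : a ≠ x) (hy : a ≠ y) : G.Adj a b :=
  (sup_adj ..).1 h |>.resolve_right fun h' => by rw [edge_adj] at h'; tauto

lemma neighborSet_subset_of_card_le {V : Type*} [Fintype V] {G : SimpleGraph V}
    [DecidableRel G.Adj] {v w : V} {S : Finset V} (hS : (S : Set V) ⊆ G.commonNeighbors v w)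
    (hcard : G.degree v ≤ #S) : G.neighborSet v ⊆ G.neighborSet w := by
  have hSv : S ⊆ G.neighborFinset v := fun z hz => by simpa using (hS hz).1
  have hSeq := eq_of_subset_of_card_le hSv (by rwa [card_neighborFinset_eq_degree])
  intro x hx
  exact (hS (by simpa [hSeq] using hx)).2

section Counting

variable {V : Type*} [Fintype V] [DecidableEq V] {G : SimpleGraph V} [DecidableRel G.Adj]

lemma sum_card_neighborFinset_inter_comm (s t : Finset V) :
    ∑ x ∈ s, #(G.neighborFinset x ∩ t) = ∑ y ∈ t, #(G.neighborFinset y ∩ s) := by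
  have h : ∀ x (s : Finset V), G.neighborFinset x ∩ s = s.bipartiteAbove G.Adj x := by
    intro x s; ext; simp [and_comm]
  simp_rw [h]
  rw [sum_card_bipartiteAbove_eq_sum_card_bipartiteBelow]
  simp_rw [bipartiteBelow, G.adj_comm _ _]
  rfl

lemma degree_eq_card_inter_add_card_inter_compl (x : V) (s : Finset V) :
    G.degree x = #(G.neighborFinset x ∩ s) + #(G.neighborFinset x ∩ sᶜ) := by
  rw [← sdiff_eq_inter_compl, card_inter_add_card_sdiff, card_neighborFinset_eq_degree]

lemma IsClique.card_le_card_neighborFinset_inter_add_one {S s : Finset V}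
    (hS : G.IsClique (S : Set V)) (hSs : S ⊆ s) {x : V} (hx : x ∈ S) :
    #S ≤ #(G.neighborFinset x ∩ s) + 1 := by
  have : S.erase x ⊆ G.neighborFinset x ∩ s := fun z hz => by
    obtain ⟨hzx, hz⟩ := mem_erase.1 hz
    exact mem_inter.2 ⟨(mem_neighborFinset ..).2 (hS (mem_coe.2 hx) hz hzx.symm), hSs hz⟩
  have := card_le_card this
  rw [card_erase_of_mem hx] at this
  omega

lemma sum_degrees_eq_two_mul_degree_add_sum (v : V) :
    ∑ x, G.degree x =
      2 * G.degree v + ∑ x ∈ G.neighborFinset v, #(G.neighborFinset x ∩ G.neighborFinset v) +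
        ∑ y ∈ (insert v (G.neighborFinset v))ᶜ,
          (#(G.neighborFinset y ∩ G.neighborFinset v) + G.degree y) := by
  set N := G.neighborFinset v
  set W := (insert v N)ᶜ
  have hvN : v ∉ N := by simp [N]
  have hN : ∀ x ∈ N,
      G.degree x = #(G.neighborFinset x ∩ N) + 1 + #(G.neighborFinset x ∩ W) := by
    intro x hx
    have hvx : v ∈ G.neighborFinset x := by simpa [N, adj_comm] using hx
    rw [degree_eq_card_inter_add_card_inter_compl x (insert v N), inter_insert_of_mem hvx,
      card_insert_of_notMem fun h => hvN (mem_inter.1 h).2]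
  rw [← sum_add_sum_compl (insert v N), sum_insert hvN, sum_congr rfl hN, sum_add_distrib,
    sum_add_distrib, sum_add_distrib, sum_const, smul_eq_mul, mul_one,
    sum_card_neighborFinset_inter_comm N W, card_neighborFinset_eq_degree]
  ring

lemma card_neighborFinset_inter_add_card_mul_le_sum_of_isClique {S s : Finset V}
    (hS : G.IsClique (S : Set V)) (hSs : S ⊆ s) {u : V} (hu : u ∈ s) (huS : u ∉ S) :
    #(G.neighborFinset u ∩ s) + #S * (#S - 1) ≤ ∑ x ∈ s, #(G.neighborFinset x ∩ s) := by
  have hS' : #S • (#S - 1) ≤ ∑ x ∈ S, #(G.neighborFinset x ∩ s) :=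
    card_nsmul_le_sum _ _ _ fun x hx => by
      have := hS.card_le_card_neighborFinset_inter_add_one hSs hx; omega
  calc #(G.neighborFinset u ∩ s) + #S * (#S - 1)
      ≤ ∑ x ∈ insert u S, #(G.neighborFinset x ∩ s) := by
        rw [sum_insert huS]; exact add_le_add_right hS' _
    _ ≤ _ := sum_le_sum_of_subset (insert_subset hu hSs)

variable {k : ℕ} {v : V}

lemma HasCommonCliques.le_card_neighborFinset_inter (hcl : G.HasCommonCliques k) {y : V}
    (hy : y ∈ (insert v (G.neighborFinset v))ᶜ) :
    k ≤ #(G.neighborFinset y ∩ G.neighborFinset v) := by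
  simp only [mem_compl, mem_insert, mem_neighborFinset, not_or] at hy
  obtain ⟨T, hT, hTvy⟩ := hcl v y (Ne.symm hy.1) hy.2
  rw [← hT.card_eq]
  refine card_le_card fun z hz => ?_
  have := hTvy (mem_coe.2 hz)
  rw [mem_commonNeighbors] at this
  simp [this]

lemma HasCommonCliques.le_sum_card_inter_add_degree (hcl : G.HasCommonCliques k)
    (hmin : ∀ x, G.degree v ≤ G.degree x) {K : Finset V} (hK : G.IsClique (K : Set V))
    (hKW : K ⊆ (insert v (G.neighborFinset v))ᶜ) :
    (#(insert v (G.neighborFinset v))ᶜ - #K) * (k + G.degree v) + #K * (2 * k + (#K - 1)) ≤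
      ∑ y ∈ (insert v (G.neighborFinset v))ᶜ,
        (#(G.neighborFinset y ∩ G.neighborFinset v) + G.degree y) := by
  refine card_sdiff_mul_add_card_mul_le_sum hKW
    (fun y hy => add_le_add (hcl.le_card_neighborFinset_inter hy) (hmin y)) fun y hy => ?_
  have hyW := hKW hy
  have hvy : v ∉ G.neighborFinset y := by
    simp only [mem_compl, mem_insert, mem_neighborFinset, not_or] at hyW ⊢
    exact fun h => hyW.2 h.symm
  have hdeg :=
    degree_eq_card_inter_add_card_inter_compl (G := G) y (insert v (G.neighborFinset v))
  rw [inter_insert_of_notMem hvy] at hdeg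
  have h₁ := hcl.le_card_neighborFinset_inter hyW
  have h₂ := hK.card_le_card_neighborFinset_inter_add_one hKW hy
  omega

-- `a` and `b - 1` count the common clique of `u` and `w` inside `N(v)` and outside `N[v]`.
theorem HasCommonCliques.exists_le_sum_degrees (hcl : G.HasCommonCliques k)
    (hmin : ∀ x, G.degree v ≤ G.degree x) {u w : V} (hwv : w ≠ v) (hvw : ¬ G.Adj v w)
    (hvu : G.Adj v u) (huw : ¬ G.Adj u w) :
    ∃ a b, k + 1 ≤ a + b ∧ 1 ≤ b ∧ b + G.degree v + 1 ≤ Fintype.card V ∧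
      2 * G.degree v + (a + k * (k - 1)) +
        ((Fintype.card V - 1 - G.degree v - b) * (k + G.degree v) + b * (2 * k + (b - 1))) ≤
      ∑ x, G.degree x := by
  set N := G.neighborFinset v with hN
  set W := (insert v N)ᶜ with hW
  have hvN : v ∉ N := by simp [N]
  have huN : u ∈ N := by simpa [N]
  have hwW : w ∈ W := by simp [W, N, hwv, hvw]
  have hWcard : #W = Fintype.card V - 1 - G.degree v := by
    rw [card_compl, card_insert_of_notMem hvN, card_neighborFinset_eq_degree]; omega
  obtain ⟨S, hS, hSvw⟩ := hcl v w hwv.symm hvw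
  obtain ⟨S', hS', hS'uw⟩ := hcl u w (by rintro rfl; exact hvw hvu) huw
  have hSN : S ⊆ N := fun z hz => by simpa [N] using (hSvw hz).1
  have huS : u ∉ S := fun h => huw (hSvw h).2.symm
  have hvS' : v ∉ S' := fun h => hvw (hS'uw h).2.symm
  have hwS' : w ∉ S' := fun h => G.irrefl (hS'uw h).2
  set K := insert w (S' ∩ W)
  have hKW : K ⊆ W := insert_subset hwW inter_subset_right
  have hK : G.IsClique (K : Set V) := by
    rw [coe_insert]
    exact (hS'.isClique.subset (coe_subset.2 inter_subset_left)).insert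
      fun z hz _ => (hS'uw (mem_coe.2 (mem_inter.1 hz).1)).2
  have hbK : #K = #(S' ∩ W) + 1 := card_insert_of_notMem fun h => hwS' (mem_inter.1 h).1
  refine ⟨#(S' ∩ N), #K, ?_, by omega, by have := card_le_card hKW; omega, ?_⟩
  · have := card_inter_add_card_sdiff S' (insert v N)
    rw [inter_insert_of_notMem hvS', sdiff_eq_inter_compl, ← hW, hS'.card_eq] at this
    omega
  · have ha : #(S' ∩ N) ≤ #(G.neighborFinset u ∩ N) :=
      card_le_card <| inter_subset_inter_right fun z hz => by simpa using (hS'uw hz).1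
    have hB := card_neighborFinset_inter_add_card_mul_le_sum_of_isClique hS.isClique hSN huN huS
    have hM := hcl.le_sum_card_inter_add_degree hmin hK hKW
    rw [hS.card_eq] at hB
    rw [← hN, ← hW, hWcard] at hM
    rw [sum_degrees_eq_two_mul_degree_add_sum v, ← hN, ← hW]
    omega

end Counting

end SimpleGraph

open SimpleGraph

theorem IsSat.exists_adj_isNClique_commonNeighbors {G : SimpleGraph α} {H : SimpleGraph β}
    (hsat : IsSat G H) {x y : α} (hne : x ≠ y) (hxy : ¬ G.Adj x y) :
    ∃ a b, H.Adj a b ∧ ∀ K : Finset β, H.IsClique (K : Set β) →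
      (K : Set β) ⊆ H.commonNeighbors a b →
        ∃ S : Finset α, G.IsNClique #K S ∧ (S : Set α) ⊆ G.commonNeighbors x y := by
  classical
  obtain ⟨f, hf, hhom⟩ := hsat.2 x y hne hxy
  -- Otherwise `f` would embed `H` into `G` itself.
  obtain ⟨a, b, hab, rfl, rfl⟩ : ∃ a b, H.Adj a b ∧ f a = x ∧ f b = y := by
    by_contra! h
    refine hsat.1 ⟨f, hf, fun a b hab => ?_⟩
    rcases (sup_adj ..).1 (hhom a b hab) with h' | h'
    · exact h'
    · rcases ((edge_adj ..).1 h').1 with ⟨ha, hb⟩ | ⟨ha, hb⟩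
      · exact absurd hb (h a b hab ha)
      · exact absurd ha (h b a hab.symm hb)
  refine ⟨a, b, hab, fun K hK hKab => ?_⟩
  have hKab' : ∀ c ∈ K, H.Adj a c ∧ H.Adj b c := fun c hc => H.mem_commonNeighbors.1 (hKab hc)
  have hKG : ∀ c ∈ K, ∀ d, H.Adj c d → G.Adj (f c) (f d) := fun c hc d hcd =>
    adj_of_adj_sup_edge (hhom c d hcd) (hf.ne (hKab' c hc).1.ne') (hf.ne (hKab' c hc).2.ne')
  refine ⟨K.image f, ⟨?_, card_image_of_injective K hf⟩, ?_⟩ <;> rw [coe_image]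
  · rintro _ ⟨c, hc, rfl⟩ _ ⟨c', hc', rfl⟩ hcc'
    exact hKG c hc c' (hK hc hc' (ne_of_apply_ne f hcc'))
  · rintro _ ⟨c, hc, rfl⟩
    exact ⟨(hKG c hc a (hKab' c hc).1.symm).symm, (hKG c hc b (hKab' c hc).2.symm).symm⟩

theorem IsSat.hasCommonCliques_of_cliqueUnion {G : SimpleGraph α} {t k : ℕ} {p : ℕ → ℕ}
    (hsat : IsSat G (cliqueUnion t p)) (hk : ∀ i : Fin t, k + 2 ≤ p (i + 1)) :
    G.HasCommonCliques k := by
  classical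
  intro x y hne hxy
  obtain ⟨⟨i, z₁⟩, ⟨j, z₂⟩, ⟨hne', hij⟩, hK⟩ :=
    hsat.exists_adj_isNClique_commonNeighbors hne hxy
  obtain rfl : i = j := hij
  have hz : z₁ ≠ z₂ := fun h => hne' (h ▸ rfl)
  set K := ((univ.erase z₁).erase z₂).map
    (Function.Embedding.sigmaMk (β := fun j : Fin t => Fin (p (j + 1))) i)
  have hKc : (cliqueUnion t p).IsClique (K : Set _) := by
    simp only [K, coe_map]
    rintro _ ⟨z, -, rfl⟩ _ ⟨z', -, rfl⟩ hzz'
    exact ⟨hzz', rfl⟩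
  have hKn : (K : Set _) ⊆ (cliqueUnion t p).commonNeighbors ⟨i, z₁⟩ ⟨i, z₂⟩ := by
    simp only [K, coe_map]
    rintro _ ⟨z, hz, rfl⟩
    simp only [coe_erase, coe_univ, Set.mem_sdiff, Set.mem_singleton_iff] at hz
    simp_all [mem_commonNeighbors, cliqueUnion, eq_comm]
  obtain ⟨S, hS, hSxy⟩ := hK K hKc hKn
  obtain ⟨T, hTS, hT⟩ := exists_subset_card_eq (s := S) (n := k) (by
    rw [hS.card_eq, card_map, card_erase_of_mem (mem_erase.2 ⟨hz.symm, mem_univ _⟩),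
      card_erase_of_mem (mem_univ _), card_univ, Fintype.card_fin]
    have := hk i; omega)
  exact ⟨T, ⟨hS.isClique.subset (coe_subset.2 hTS), hT⟩, (coe_subset.2 hTS).trans hSxy⟩

section Hgraph

instance inst_s6 (p : ℕ → ℕ) (i a : ℕ) : Decidable (inBlock p i a) :=
  inferInstanceAs (Decidable (_ ∧ _))

variable {n t : ℕ} {p : ℕ → ℕ}

lemma Hgraph_adj_cases {x y : Fin n} (h : (Hgraph n t p).Adj x y) :
    (x : ℕ) < p 1 - 2 ∨ (y : ℕ) < p 1 - 2 ∨
      ∃ i ∈ Icc 2 t, inBlock p i x ∧ inBlock p i y := by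
  simp only [Hgraph, fromRel_adj] at h
  grind

lemma card_filter_inBlock_le (i : ℕ) : #{y : Fin n | inBlock p i y} ≤ p i + 1 := by
  simpa using card_le_card_of_injOn (t := Ico (blockStart p i) (blockStart p i + (p i + 1)))
    (fun y : Fin n => (y : ℕ)) (fun y hy => by simpa [inBlock] using mem_filter.1 hy)
    Fin.val_injective.injOn

lemma degree_Hgraph_le [DecidableRel (Hgraph n t p).Adj] {x : Fin n} (hx : p 1 - 2 ≤ x) :
    (Hgraph n t p).degree x ≤
      (p 1 - 2) + ∑ i ∈ Icc 2 t, if inBlock p i x then p i else 0 := by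
  rw [← sum_filter, ← card_neighborFinset_eq_degree]
  calc #((Hgraph n t p).neighborFinset x)
      ≤ #(({y | (y : ℕ) < p 1 - 2} : Finset (Fin n)) ∪
          {i ∈ Icc 2 t | inBlock p i x}.biUnion
            fun i => ({y | inBlock p i y} : Finset (Fin n)).erase x) := by
        refine card_le_card fun y hy => ?_
        rw [mem_neighborFinset] at hy
        rcases Hgraph_adj_cases hy with h | h | ⟨i, hi, hxi, hyi⟩
        · omega
        · simp [h]
        · simp only [mem_union, mem_biUnion, mem_filter, mem_erase, mem_univ, true_and]
          exact .inr ⟨i, ⟨hi, hxi⟩, hy.ne', hyi⟩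
    _ ≤ (p 1 - 2) + ∑ i ∈ Icc 2 t with inBlock p i x, p i := by
        refine (card_union_le _ _).trans (add_le_add ?_ (card_biUnion_le.trans (sum_le_sum ?_)))
        · simp [Fin.card_filter_val_lt]
        · intro i hi
          have := card_filter_inBlock_le (n := n) (p := p) i
          rw [card_erase_of_mem (mem_filter.2 ⟨mem_univ x, (mem_filter.1 hi).2⟩)]
          omega

theorem two_mul_ncard_edgeSet_Hgraph_le (hn : p 1 - 2 ≤ n) :
    2 * (Hgraph n t p).edgeSet.ncard ≤
      (p 1 - 2) * (n - 1) + (p 1 - 2) * (n - (p 1 - 2)) + ∑ i ∈ Icc 2 t, p i * (p i + 1) := by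
  classical
  set c := p 1 - 2
  rw [← coe_edgeFinset, Set.ncard_coe_finset, ← sum_degrees_eq_twice_card_edges]
  calc ∑ x, (Hgraph n t p).degree x
      ≤ ∑ x : Fin n, ((if (x : ℕ) < c then n - 1 else c) +
          ∑ i ∈ Icc 2 t, if inBlock p i x then p i else 0) := by
        refine sum_le_sum fun x _ => ?_
        split_ifs with hx
        · have := (Hgraph n t p).degree_lt_card_verts x
          simp only [Fintype.card_fin] at this
          omega
        · exact degree_Hgraph_le (not_lt.1 hx)
    _ ≤ c * (n - 1) + c * (n - c) + ∑ i ∈ Icc 2 t, p i * (p i + 1) := by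
        rw [sum_add_distrib, sum_ite, sum_const, sum_const, sum_comm]
        have hcore : #({x | (x : ℕ) < c} : Finset (Fin n)) = c := by
          rw [Fin.card_filter_val_lt, min_eq_right hn]
        have hrest : #({x | ¬ (x : ℕ) < c} : Finset (Fin n)) = n - c := by
          rw [filter_not, card_sdiff_of_subset (filter_subset _ _), hcore, card_univ,
            Fintype.card_fin]
        have hblocks : ∀ i ∈ Icc 2 t,
            ∑ x : Fin n, (if inBlock p i x then p i else 0) ≤ p i * (p i + 1) := by
          intro i _
          rw [← sum_filter, sum_const, smul_eq_mul, mul_comm]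
          exact Nat.mul_le_mul_left _ (card_filter_inBlock_le i)
        rw [hcore, hrest, smul_eq_mul, smul_eq_mul, mul_comm (n - c)]
        exact add_le_add_right (sum_le_sum hblocks) _

end Hgraph

-- With `s = d(v) - c`, this is the excess of the degree-sum lower bound for `G` over the
-- degree-sum bound for `H(n; p₁, …, p_t)`.
lemma excess_pos {a b s P : ℤ} (ha : 0 ≤ a) (hb : 1 ≤ b) (hs : 1 ≤ s) (hab : 2 ≤ a + b)
    (hP : (s + 2) * (s + 3) ≤ P) :
    0 < a + (s - 1) * P + s * (2 - s) + b * (b - 1 - s) := by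
  rcases hs.eq_or_lt with rfl | hs
  · have : 0 ≤ (b - 1) * (b - 2) := by
      rcases hb.eq_or_lt with rfl | hb
      · simp
      · exact mul_nonneg (by omega) (by omega)
    nlinarith
  · have h₁ : (s - 1) * ((s + 2) * (s + 3)) ≤ (s - 1) * P := by gcongr
    have hs₀ : (0 : ℤ) ≤ s := by omega
    nlinarith [sq_nonneg (2 * b - s - 1), mul_nonneg (mul_nonneg hs₀ hs₀) hs₀]

lemma extremal_bound_lt {n k δ a b P : ℕ} (hkδ : k < δ) (hδk : δ ≤ 2 * k)
    (hab : k + 1 ≤ a + b) (hb : 1 ≤ b) (hbn : b + δ + 1 ≤ n) (hn : 3 * k + P < n)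
    (hP : (k + 2) * (k + 3) ≤ P) :
    k * (n - 1) + k * (n - k) + P <
      2 * δ + (a + k * (k - 1)) + ((n - 1 - δ - b) * (k + δ) + b * (2 * k + (b - 1))) := by
  obtain ⟨s, rfl⟩ : ∃ s, δ = k + s := ⟨δ - k, by omega⟩
  obtain ⟨r, rfl⟩ : ∃ r, n = b + (k + s) + 1 + r := ⟨n - (b + (k + s) + 1), by omega⟩
  have hsP : (s + 2) * (s + 3) ≤ P := le_trans (by gcongr <;> omega) hP
  have key := excess_pos (a := a) (b := b) (s := s) (P := P) (by positivity) (by exact_mod_cast hb)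
    (by omega) (by omega) (by exact_mod_cast hsP)
  rw [show b + (k + s) + 1 + r - 1 - (k + s) - b = r by omega,
    show b + (k + s) + 1 + r - 1 = b + (k + s) + r by omega,
    show b + (k + s) + 1 + r - k = b + s + 1 + r by omega]
  have hr : 0 ≤ (s : ℤ) * (b + s + r - 2 * k - P) := mul_nonneg (by positivity) (by omega)
  zify [show 1 ≤ k by omega, hb]
  nlinarith

lemma le_two_mul_of_mul_le {n k δ P : ℕ} (hn : 3 * k + P < n)
    (h : n * δ ≤ k * (n - 1) + k * (n - k) + P) : δ ≤ 2 * k := by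
  by_contra hδ
  have h₁ : n * (2 * k + 1) ≤ n * δ := Nat.mul_le_mul_left _ (by omega)
  have h₂ : k * (n - 1) ≤ k * n := Nat.mul_le_mul_left _ (Nat.sub_le _ _)
  have h₃ : k * (n - k) ≤ k * n := Nat.mul_le_mul_left _ (Nat.sub_le _ _)
  nlinarith

/-- `N_G(v) ⊆ N_G(w)` for every `w ∉ N_G(v) ∪ {v}`. -/
theorem neighborSet_subset (n t : ℕ) (p : ℕ → ℕ) (ht : 2 ≤ t) (hp1 : 2 ≤ p 1)
    (hmono : ∀ i j, 1 ≤ i → i ≤ j → j ≤ t → p i ≤ p j)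
    (hn : 3 * (p 1 - 2) + ∑ i ∈ Finset.Icc 2 t, p i * (p i + 1) < n)
    (G : SimpleGraph (Fin n)) (hsat : IsSat G (cliqueUnion t p))
    (hE : G.edgeSet.ncard ≤ (Hgraph n t p).edgeSet.ncard)
    (v : Fin n)
    (hmin : ∀ u, (G.neighborSet v).ncard ≤ (G.neighborSet u).ncard) :
    ∀ w : Fin n, w ∉ G.neighborSet v → w ≠ v →
      G.neighborSet v ⊆ G.neighborSet w := by
  classical
  intro w hw hwv
  set c := p 1 - 2
  set P := ∑ i ∈ Icc 2 t, p i * (p i + 1)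
  have hcl : G.HasCommonCliques c := hsat.hasCommonCliques_of_cliqueUnion fun i => by
    have := hmono 1 (i + 1) le_rfl (by omega) (by omega); omega
  have hdeg : ∀ x, G.degree v ≤ G.degree x := fun x => by
    simpa only [← coe_neighborFinset, Set.ncard_coe_finset, card_neighborFinset_eq_degree]
      using hmin x
  have hE' : ∑ x, G.degree x ≤ c * (n - 1) + c * (n - c) + P := by
    rw [sum_degrees_eq_twice_card_edges, ← Set.ncard_coe_finset, coe_edgeFinset]
    exact (Nat.mul_le_mul_left 2 hE).trans (two_mul_ncard_edgeSet_Hgraph_le (by omega))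
  obtain ⟨S, hS, hSvw⟩ := hcl v w hwv.symm hw
  by_cases hδ : G.degree v ≤ c
  · exact neighborSet_subset_of_card_le hSvw (hS.card_eq ▸ hδ)
  intro u hu
  by_contra huw
  have hnδ : n * G.degree v ≤ ∑ x, G.degree x := by
    simpa using card_nsmul_le_sum univ _ _ fun x _ => hdeg x
  have hδ₂ : G.degree v ≤ 2 * c := le_two_mul_of_mul_le hn (hnδ.trans hE')
  have hP : (c + 2) * (c + 3) ≤ P := by
    have h₁₂ := hmono 1 2 le_rfl (by omega) ht
    calc (c + 2) * (c + 3) ≤ p 2 * (p 2 + 1) := Nat.mul_le_mul (by omega) (by omega)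
      _ ≤ P := single_le_sum (f := fun i => p i * (p i + 1)) (fun i _ => Nat.zero_le _)
        (mem_Icc.2 ⟨le_rfl, ht⟩)
  obtain ⟨a, b, hab, hb, hbn, hsum⟩ :=
    hcl.exists_le_sum_degrees hdeg hwv hw hu fun h => huw h.symm
  rw [Fintype.card_fin] at hbn hsum
  exact (hsum.trans hE').not_gt (extremal_bound_lt (not_le.1 hδ) hδ₂ hab hb hbn hn hP)
end
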